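/- Let C be an ILFSC on Σ with s states, |Σ| = k. For every ℓ ≤ n and every u ∈ Σⁿ, H(π_{u_ℓ}^{(ℓ)})/(ℓ log k) − ρ_C(u) ≤ ⌊n/ℓ⌋⁻¹ + f_s^k(ℓ), where u_ℓ = u ↾ ⌊n/ℓ⌋·ℓ and f_s^k(ℓ) = log(s²(1 + log((s² + k^ℓ)/s²)))/(ℓ log k). -/

import Mathlib

open Filter Real

/-- Base-2 Shannon entropy of a discrete probability measure on a finite set. -/
noncomputable def ent {X : Type*} [Fintype X] (α : X → ℝ) : ℝ :=
  ∑ x, α x * Real.logb 2 (α x)⁻¹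

/-- A finite-state compressor on alphabet `Γ`. -/
structure FSC (Γ : Type) where
  Q : Type
  fin : Fintype Q
  δ : Q → Γ → Q
  ν : Q → Γ → List Bool
  q0 : Q

attribute [instance] FSC.fin

/-- Extended transition function, starting from state `q`. -/
def FSC.runFrom {Γ : Type} (C : FSC Γ) : C.Q → List Γ → C.Q
  | q, [] => q
  | q, a :: u => C.runFrom (C.δ q a) u

/-- Output of the compressor started in state `q`. -/
def FSC.outFrom {Γ : Type} (C : FSC Γ) : C.Q → List Γ → List Bool
  | _, [] => []
  | q, a :: u => C.ν q a ++ C.outFrom (C.δ q a) u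

/-- Output of the compressor on input `u` (from the initial state). -/
def FSC.output {Γ : Type} (C : FSC Γ) (u : List Γ) : List Bool := C.outFrom C.q0 u

/-- Information-losslessness: `u ↦ (C(u), δ*(q₀,u))` is injective. -/
def FSC.IL {Γ : Type} (C : FSC Γ) : Prop :=
  Function.Injective fun u : List Γ => (C.output u, C.runFrom C.q0 u)

/-- Number of states. -/
def FSC.states {Γ : Type} (C : FSC Γ) : ℕ := Fintype.card C.Q

/-- `L_C(w)`: the minimum over all states `q` of the output length of `C` started at `q`. -/
noncomputable def FSC.L {Γ : Type} (C : FSC Γ) (w : List Γ) : ℕ :=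
  haveI : Nonempty C.Q := ⟨C.q0⟩
  Finset.univ.inf' Finset.univ_nonempty fun q => (C.outFrom q w).length

/-- Compression ratio of `u` attained by `C`, over an alphabet of size `k`. -/
noncomputable def compRatio (k : ℕ) {Γ : Type} (C : FSC Γ) (u : List Γ) : ℝ :=
  ((C.output u).length : ℝ) / (u.length * Real.logb 2 k)

/-- Aligned block frequency of the block `x` (of length `ℓ`) in the string `u`. -/
noncomputable def blockFreqL {k : Type} [DecidableEq k] (ℓ : ℕ) (u : List k) (x : List k) : ℝ :=
  (ℓ : ℝ) / u.length *
    ((List.range (u.length / ℓ)).filter fun m => (u.drop (m * ℓ)).take ℓ = x).length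

/-- The function `f_s^k(ℓ)` from the Generalized Kraft Inequality. -/
noncomputable def fsk (s k ℓ : ℕ) : ℝ :=
  Real.logb 2 ((s : ℝ) ^ 2 *
      (1 + Real.logb 2 (((s : ℝ) ^ 2 + (k : ℝ) ^ ℓ) / (s : ℝ) ^ 2))) /
    (ℓ * Real.logb 2 k)

/-!
Cut `u_ℓ` into its `m = ⌊n/ℓ⌋` aligned blocks of length `ℓ`. Information losslessness makes
`x ↦ (q, δ*(q, x), C_q(x))` injective for each reachable `q`, so at most `s² 2^t` words
`x ∈ Σ^ℓ` have `L(x) = t`; filling the lengths greedily yields the Generalized Kraft Inequality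
`∑ₓ 2^{-L(x)} ≤ s² (1 + log ((s² + k^ℓ)/s²))`.
Gibbs' inequality bounds the block entropy by the block average of `L` plus the logarithm of the
Kraft sum, and that average is at most `|C(u)| / m` since the compressor enters every block in a
reachable state. Dividing by `ℓ log k` and comparing `m ℓ` with `n` costs the extra `1/m`.
-/

open Finset

namespace FSC

variable {Γ : Type} (C : FSC Γ)

theorem runFrom_append (q : C.Q) (v w : List Γ) :
    C.runFrom q (v ++ w) = C.runFrom (C.runFrom q v) w := by
  induction v generalizing q with
  | nil => rfl
  | cons a v ih => exact ih (C.δ q a)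

theorem outFrom_append (q : C.Q) (v w : List Γ) :
    C.outFrom q (v ++ w) = C.outFrom q v ++ C.outFrom (C.runFrom q v) w := by
  induction v generalizing q with
  | nil => rfl
  | cons a v ih => simp only [List.cons_append, outFrom, runFrom, ih, List.append_assoc]

theorem length_outFrom_le_of_prefix (q : C.Q) {v w : List Γ} (h : v <+: w) :
    (C.outFrom q v).length ≤ (C.outFrom q w).length := by
  obtain ⟨t, rfl⟩ := h
  simp only [outFrom_append, List.length_append, Nat.le_add_right]

def Reachable (q : C.Q) : Prop := ∃ w, C.runFrom C.q0 w = q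

theorem Reachable.runFrom {C : FSC Γ} {q : C.Q} (hq : C.Reachable q) (v : List Γ) :
    C.Reachable (C.runFrom q v) := by
  obtain ⟨w, rfl⟩ := hq
  exact ⟨w ++ v, C.runFrom_append _ w v⟩

theorem IL.cancel {C : FSC Γ} (hC : C.IL) {q : C.Q} (hq : C.Reachable q) {v w : List Γ}
    (hout : C.outFrom q v = C.outFrom q w) (hrun : C.runFrom q v = C.runFrom q w) : v = w := by
  obtain ⟨p, rfl⟩ := hq
  refine List.append_cancel_left (@hC (p ++ v) (p ++ w) ?_)
  simp only [output, outFrom_append, runFrom_append, hout, hrun]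

open Classical in
noncomputable def reachableStates : Finset C.Q := {q | C.Reachable q}

theorem mem_reachableStates {q : C.Q} : q ∈ C.reachableStates ↔ C.Reachable q := by
  simp [reachableStates]

theorem reachableStates_nonempty : C.reachableStates.Nonempty :=
  ⟨C.q0, C.mem_reachableStates.2 ⟨[], rfl⟩⟩

/-- The paper's `L_C(w)`, minimized over reachable states only: information losslessness
constrains nothing at an unreachable state, which may output `[]` on every input. -/
noncomputable def Lreach (w : List Γ) : ℕ :=
  C.reachableStates.inf' C.reachableStates_nonempty fun q => (C.outFrom q w).length

theorem Lreach_le {q : C.Q} (hq : C.Reachable q) (w : List Γ) :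
    C.Lreach w ≤ (C.outFrom q w).length :=
  inf'_le _ (C.mem_reachableStates.2 hq)

theorem exists_reachable_Lreach_eq (w : List Γ) :
    ∃ q, C.Reachable q ∧ C.Lreach w = (C.outFrom q w).length := by
  obtain ⟨q, hq, h⟩ := exists_mem_eq_inf' C.reachableStates_nonempty
    fun q => (C.outFrom q w).length
  exact ⟨q, C.mem_reachableStates.1 hq, h⟩

theorem states_pos : 0 < C.states :=
  Fintype.card_pos_iff.2 ⟨C.q0⟩

end FSC

def alignedBlock {α : Type*} (ℓ : ℕ) (u : List α) (j : ℕ) : List α :=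
  (u.drop (j * ℓ)).take ℓ

theorem alignedBlock_zero {α : Type*} (ℓ : ℕ) (u : List α) :
    alignedBlock ℓ u 0 = u.take ℓ := by
  simp [alignedBlock]

theorem alignedBlock_succ {α : Type*} (ℓ : ℕ) (u : List α) (j : ℕ) :
    alignedBlock ℓ u (j + 1) = alignedBlock ℓ (u.drop ℓ) j := by
  rw [alignedBlock, alignedBlock, List.drop_drop, Nat.succ_mul, Nat.add_comm]

theorem length_alignedBlock {α : Type*} {ℓ m j : ℕ} {v : List α} (hv : v.length = m * ℓ)
    (hj : j < m) :
    (alignedBlock ℓ v j).length = ℓ := by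
  have : j * ℓ + ℓ ≤ m * ℓ := by nlinarith
  simp only [alignedBlock, List.length_take, List.length_drop, hv]
  omega

/-- Sheinwald's lower bound: the compressor enters every block in a reachable state. -/
theorem FSC.sum_Lreach_alignedBlock_le {Γ : Type} (C : FSC Γ) (ℓ m : ℕ) {q : C.Q}
    (hq : C.Reachable q) (w : List Γ) :
    ∑ j ∈ range m, C.Lreach (alignedBlock ℓ w j) ≤ (C.outFrom q w).length := by
  induction m generalizing q w with
  | zero => simp
  | succ m ih =>
    have hsplit := congrArg List.length (C.outFrom_append q (w.take ℓ) (w.drop ℓ))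
    rw [List.take_append_drop, List.length_append] at hsplit
    rw [sum_range_succ', hsplit, Nat.add_comm]
    simp only [alignedBlock_succ, alignedBlock_zero]
    exact Nat.add_le_add (C.Lreach_le hq _) (ih (hq.runFrom _) _)

theorem FSC.IL.card_Lreach_eq_le {Γ : Type} [Fintype Γ] {C : FSC Γ} (hC : C.IL) (ℓ t : ℕ) :
    #{x : Fin ℓ → Γ | C.Lreach (List.ofFn x) = t} ≤ C.states ^ 2 * 2 ^ t := by
  classical
  choose q hq hLq using fun x : Fin ℓ → Γ => C.exists_reachable_Lreach_eq (List.ofFn x)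
  let codes : Finset (List Bool) := univ.image (List.ofFn : (Fin t → Bool) → List Bool)
  let target : Finset (C.Q × C.Q × List Bool) := univ ×ˢ univ ×ˢ codes
  let f (x : Fin ℓ → Γ) : C.Q × C.Q × List Bool :=
    (q x, C.runFrom (q x) (List.ofFn x), C.outFrom (q x) (List.ofFn x))
  let fiber : Finset (Fin ℓ → Γ) := {x | C.Lreach (List.ofFn x) = t}
  have hmaps : Set.MapsTo f fiber target := by
    intro x hx
    have hlen : (C.outFrom (q x) (List.ofFn x)).length = t := by
      rw [← hLq x]; simpa [fiber] using hx
    simp only [f, target, codes, coe_product, coe_univ, Set.mem_prod, Set.mem_univ, true_and,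
      mem_coe, mem_image]
    generalize C.outFrom (q x) (List.ofFn x) = l at hlen ⊢
    subst hlen
    exact ⟨l.get, mem_univ _, List.ofFn_get l⟩
  have hinj : Set.InjOn f fiber := by
    intro x _ y _ hxy
    simp only [f, Prod.mk.injEq] at hxy
    obtain ⟨hqxy, hrun, hout⟩ := hxy
    rw [← hqxy] at hrun hout
    exact List.ofFn_injective (hC.cancel (hq x) hout hrun)
  have hcodes : #codes ≤ 2 ^ t := card_image_le.trans (by simp)
  calc #fiber ≤ #target := card_le_card_of_injOn f hmaps hinj
    _ ≤ C.states ^ 2 * 2 ^ t := by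
      rw [card_product, card_product, card_univ, ← FSC.states, sq, Nat.mul_assoc]
      gcongr

section Kraft

variable {X : Type*} [Fintype X] {L : X → ℕ} {A : ℝ}

theorem sum_inv_two_pow_le_mul_succ_of_card_le (hL : ∀ t, (#{x | L x = t} : ℝ) ≤ A * 2 ^ t) {T : ℕ}
    (hT : Fintype.card X + A ≤ A * 2 ^ (T + 1)) :
    ∑ x, ((2 : ℝ) ^ L x)⁻¹ ≤ A * (T + 1) := by
  classical
  set ε : ℝ := ((2 : ℝ) ^ (T + 1))⁻¹ with hε
  have hε0 : 0 < ε := by positivity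
  let g (t : ℕ) : ℝ := ((2 : ℝ) ^ t)⁻¹ - ε
  have hpoint (x : X) : ((2 : ℝ) ^ L x)⁻¹ ≤ (if L x ≤ T then g (L x) else 0) + ε := by
    split_ifs with h
    · simp [g]
    · rw [zero_add]
      exact inv_anti₀ (by positivity) (pow_le_pow_right₀ one_le_two (by omega))
  have hfibers : ∑ x with L x ≤ T, g (L x) ≤ ∑ t ∈ range (T + 1), A * 2 ^ t * g t := by
    rw [← sum_fiberwise_of_maps_to' (t := range (T + 1)) fun x hx ↦ by simp at hx ⊢; omega]
    refine sum_le_sum fun t ht ↦ ?_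
    have hgt : 0 ≤ g t :=
      sub_nonneg.2 (inv_anti₀ (by positivity) (pow_le_pow_right₀ one_le_two (by simp at ht; omega)))
    rw [sum_const, nsmul_eq_mul]
    refine mul_le_mul_of_nonneg_right ((Nat.cast_le.2 (card_le_card ?_)).trans (hL t)) hgt
    exact filter_subset_filter _ (filter_subset _ _)
  have hgeom : ∑ t ∈ range (T + 1), A * 2 ^ t * g t = A * (T + 1) - A + A * ε := by
    have hε2 : (2 : ℝ) ^ (T + 1) * ε = 1 := mul_inv_cancel₀ (by positivity)
    have hterm (t : ℕ) : A * 2 ^ t * g t = A - A * ε * 2 ^ t := by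
      simp only [g]; field_simp
    simp only [hterm, sum_sub_distrib, ← mul_sum, geom_sum_eq (by norm_num : (2 : ℝ) ≠ 1)]
    simp
    linear_combination (-A) * hε2
  calc ∑ x, ((2 : ℝ) ^ L x)⁻¹ ≤ ∑ x, ((if L x ≤ T then g (L x) else 0) + ε) :=
        sum_le_sum fun x _ ↦ hpoint x
    _ = ∑ x with L x ≤ T, g (L x) + Fintype.card X * ε := by
        rw [sum_add_distrib, sum_ite, sum_const_zero, add_zero, sum_const, card_univ, nsmul_eq_mul]
    _ ≤ A * (T + 1) - A + (Fintype.card X + A) * ε := by linarith [hfibers, hgeom]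
    _ ≤ A * (T + 1) := by
        have := mul_le_mul_of_nonneg_right hT hε0.le
        rw [hε, mul_assoc, mul_inv_cancel₀ (by positivity), mul_one] at this
        linarith

/-- The Generalized Kraft Inequality, with `T = ⌊log₂ ((A + |X|) / A)⌋`. -/
theorem sum_inv_two_pow_le_of_card_le (hA : 0 < A)
    (hL : ∀ t, (#{x | L x = t} : ℝ) ≤ A * 2 ^ t) :
    ∑ x, ((2 : ℝ) ^ L x)⁻¹ ≤ A * (1 + Real.logb 2 ((A + Fintype.card X) / A)) := by
  set q := (A + Fintype.card X) / A
  have hq : 1 ≤ q := by rw [le_div_iff₀ hA]; simp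
  have hlog : 0 ≤ Real.logb 2 q := Real.logb_nonneg one_lt_two hq
  set T := ⌊Real.logb 2 q⌋₊
  have hT : Fintype.card X + A ≤ A * 2 ^ (T + 1) := by
    have := (Real.logb_lt_iff_lt_rpow one_lt_two (by positivity)).1
      (Nat.lt_floor_add_one (Real.logb 2 q))
    rw [← Nat.cast_add_one, Real.rpow_natCast, div_lt_iff₀ hA] at this
    linarith
  calc ∑ x, ((2 : ℝ) ^ L x)⁻¹ ≤ A * (T + 1) := sum_inv_two_pow_le_mul_succ_of_card_le hL hT
    _ ≤ A * (1 + Real.logb 2 q) := by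
        have hTq : (T : ℝ) ≤ Real.logb 2 q := Nat.floor_le hlog
        exact mul_le_mul_of_nonneg_left (by linarith) hA.le

end Kraft

theorem FSC.IL.sum_inv_two_pow_Lreach_le {Γ : Type} [Fintype Γ] {C : FSC Γ} (hC : C.IL)
    (ℓ : ℕ) :
    ∑ x : Fin ℓ → Γ, ((2 : ℝ) ^ C.Lreach (List.ofFn x))⁻¹ ≤
      (C.states : ℝ) ^ 2 *
        (1 + Real.logb 2 (((C.states : ℝ) ^ 2 + (Fintype.card Γ : ℝ) ^ ℓ) /
          (C.states : ℝ) ^ 2)) := by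
  have hs : (0 : ℝ) < C.states := Nat.cast_pos.2 C.states_pos
  convert sum_inv_two_pow_le_of_card_le (pow_pos hs 2)
    fun t ↦ by exact_mod_cast hC.card_Lreach_eq_le ℓ t using 5
  simp

section Entropy

variable {X : Type*} [Fintype X] {p : X → ℝ}

/-- Gibbs' inequality: apply `log y ≤ y - 1` to `y = w x / (p x * ∑ w)`. -/
theorem ent_le_sum_mul_logb_inv_add (hp0 : ∀ x, 0 ≤ p x) (hp1 : ∑ x, p x = 1) {w : X → ℝ}
    (hw : ∀ x, 0 < w x) :
    ent p ≤ ∑ x, p x * Real.logb 2 (w x)⁻¹ + Real.logb 2 (∑ x, w x) := by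
  set S := ∑ x, w x
  have hS : 0 < S := sum_pos (fun x _ ↦ hw x) (nonempty_of_sum_ne_zero (hp1 ▸ one_ne_zero))
  have hpoint (x : X) : p x * Real.log (p x)⁻¹ ≤
      p x * Real.log (w x)⁻¹ + p x * Real.log S + (w x / S - p x) := by
    rcases (hp0 x).eq_or_lt with hpx | hpx
    · rw [← hpx]; simpa using div_nonneg (hw x).le hS.le
    · have hlog := Real.log_le_sub_one_of_pos (div_pos (hw x) (mul_pos hpx hS))
      rw [Real.log_div (hw x).ne' (mul_pos hpx hS).ne', Real.log_mul hpx.ne' hS.ne'] at hlog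
      have := mul_le_mul_of_nonneg_left hlog hpx.le
      rw [Real.log_inv, Real.log_inv]
      field_simp at this ⊢
      linarith
  have hsum := sum_le_sum fun x (_ : x ∈ univ) ↦ hpoint x
  rw [sum_add_distrib, sum_add_distrib, sum_sub_distrib, ← sum_div, ← sum_mul, hp1, div_self hS.ne',
    sub_self, add_zero, one_mul] at hsum
  simp only [ent, Real.logb, mul_div_assoc', ← sum_div, ← add_div]
  exact div_le_div_of_nonneg_right hsum (Real.log_nonneg one_le_two)

theorem ent_le_logb_card (hp0 : ∀ x, 0 ≤ p x) (hp1 : ∑ x, p x = 1) :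
    ent p ≤ Real.logb 2 (Fintype.card X) := by
  simpa using ent_le_sum_mul_logb_inv_add hp0 hp1 fun _ ↦ one_pos

end Entropy

theorem FSC.IL.ent_le_sum_mul_Lreach_add {Γ : Type} [Fintype Γ] {C : FSC Γ} (hC : C.IL) {ℓ : ℕ}
    {p : (Fin ℓ → Γ) → ℝ} (hp0 : ∀ x, 0 ≤ p x) (hp1 : ∑ x, p x = 1) :
    ent p ≤ ∑ x, p x * C.Lreach (List.ofFn x) + Real.logb 2 ((C.states : ℝ) ^ 2 *
      (1 + Real.logb 2 (((C.states : ℝ) ^ 2 + (Fintype.card Γ : ℝ) ^ ℓ) /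
        (C.states : ℝ) ^ 2))) := by
  have hgibbs := ent_le_sum_mul_logb_inv_add hp0 hp1
    (w := fun x ↦ ((2 : ℝ) ^ C.Lreach (List.ofFn x))⁻¹) fun _ ↦ by positivity
  simp only [inv_inv, Real.logb_pow, Real.logb_self_eq_one one_lt_two, mul_one] at hgibbs
  have hkraft_pos : 0 < ∑ x : Fin ℓ → Γ, ((2 : ℝ) ^ C.Lreach (List.ofFn x))⁻¹ :=
    sum_pos (fun _ _ ↦ by positivity) (nonempty_of_sum_ne_zero (hp1 ▸ one_ne_zero))
  exact hgibbs.trans (add_le_add_right (Real.logb_le_logb_of_le one_lt_two hkraft_pos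
    (hC.sum_inv_two_pow_Lreach_le ℓ)) _)

section BlockFrequency

variable {α : Type} [DecidableEq α]

theorem blockFreqL_eq (ℓ : ℕ) (v x : List α) :
    blockFreqL ℓ v x = ℓ / v.length * #{j ∈ range (v.length / ℓ) | alignedBlock ℓ v j = x} :=
  rfl

theorem sum_ite_eq_ofFn [Fintype α] {M : Type*} [AddCommMonoid M] {ℓ : ℕ} {l : List α}
    (hl : l.length = ℓ) (f : List α → M) :
    ∑ x : Fin ℓ → α, (if l = List.ofFn x then f (List.ofFn x) else 0) = f l := by
  obtain ⟨y, rfl⟩ : ∃ y : Fin ℓ → α, List.ofFn y = l := by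
    subst hl; exact ⟨l.get, List.ofFn_get l⟩
  simp [List.ofFn_inj]

theorem sum_blockFreqL_mul [Fintype α] {ℓ m : ℕ} (hℓ : 0 < ℓ) {v : List α} (hv : v.length = m * ℓ)
    (F : List α → ℝ) :
    ∑ x : Fin ℓ → α, blockFreqL ℓ v (List.ofFn x) * F (List.ofFn x) =
      (∑ j ∈ range m, F (alignedBlock ℓ v j)) / m := by
  have hm : v.length / ℓ = m := by rw [hv, Nat.mul_div_cancel _ hℓ]
  calc ∑ x : Fin ℓ → α, blockFreqL ℓ v (List.ofFn x) * F (List.ofFn x)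
      = ∑ x : Fin ℓ → α, (m : ℝ)⁻¹ * ∑ j ∈ range m,
          if alignedBlock ℓ v j = List.ofFn x then F (List.ofFn x) else 0 := by
        refine sum_congr rfl fun x _ ↦ ?_
        rw [blockFreqL_eq, hm, hv, Nat.cast_mul, div_mul_cancel_right₀ (by positivity),
          natCast_card_filter, mul_assoc, sum_mul]
        simp only [ite_mul, one_mul, zero_mul]
    _ = (∑ j ∈ range m, F (alignedBlock ℓ v j)) / m := by
        rw [← mul_sum, sum_comm, inv_mul_eq_div]
        congr 1
        exact sum_congr rfl fun j hj ↦ sum_ite_eq_ofFn (length_alignedBlock hv (mem_range.1 hj)) F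

theorem blockFreqL_nonneg (ℓ : ℕ) (v x : List α) : 0 ≤ blockFreqL ℓ v x := by
  unfold blockFreqL; positivity

end BlockFrequency

theorem fsk_nonneg {s : ℕ} (hs : 0 < s) (k ℓ : ℕ) : 0 ≤ fsk s k ℓ := by
  have hs2 : (1 : ℝ) ≤ (s : ℝ) ^ 2 := one_le_pow₀ (Nat.one_le_cast.2 hs)
  have harg : 1 ≤ ((s : ℝ) ^ 2 + (k : ℝ) ^ ℓ) / (s : ℝ) ^ 2 := by
    rw [le_div_iff₀ (by positivity)]; simp
  have hlog := Real.logb_nonneg one_lt_two harg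
  refine div_nonneg (Real.logb_nonneg one_lt_two (one_le_mul_of_one_le_of_one_le hs2 ?_)) ?_
  · linarith
  · exact mul_nonneg (Nat.cast_nonneg ℓ)
      (div_nonneg (Real.log_natCast_nonneg k) (Real.log_nonneg one_le_two))

/-- If `R ≤ n c`, then `R / (m ℓ c)` exceeds `R / (n c)` by at most `1 / m`; otherwise
`R / (n c) > 1 ≥ E / (ℓ c)`. -/
theorem div_sub_div_le_inv_add_div {E R F ℓ c n m : ℝ} (hℓ : 0 < ℓ) (hc : 0 < c) (hm : 0 < m)
    (hmn : m * ℓ ≤ n) (hnm : n ≤ m * ℓ + ℓ) (hR : 0 ≤ R) (hF : 0 ≤ F / (ℓ * c))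
    (hE : E ≤ R / m + F) (hEmax : E ≤ ℓ * c) :
    E / (ℓ * c) - R / (n * c) ≤ m⁻¹ + F / (ℓ * c) := by
  have hn : 0 < n := lt_of_lt_of_le (by positivity) hmn
  by_cases hRn : R ≤ n * c
  · have key : R / (m * ℓ * c) ≤ R / (n * c) + m⁻¹ := by
      rw [← one_div, div_add_div _ _ (by positivity) hm.ne',
        div_le_div_iff₀ (by positivity) (by positivity)]
      nlinarith [mul_le_mul_of_nonneg_left hnm (by positivity : 0 ≤ R * m * c),
        mul_le_mul_of_nonneg_right hRn (by positivity : 0 ≤ m * ℓ * c)]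
    calc E / (ℓ * c) - R / (n * c) ≤ (R / m + F) / (ℓ * c) - R / (n * c) := by gcongr
      _ = R / (m * ℓ * c) - R / (n * c) + F / (ℓ * c) := by field_simp; ring
      _ ≤ m⁻¹ + F / (ℓ * c) := by linarith
  · have h1 : E / (ℓ * c) ≤ 1 := (div_le_one (by positivity)).2 hEmax
    have h2 : 1 < R / (n * c) := (one_lt_div (by positivity)).2 (not_le.1 hRn)
    have h3 : 0 ≤ m⁻¹ := by positivity
    linarith

/-- The normalized block entropy of the prefix `u_ℓ` exceeds the compression
ratio of `u` attained by an `s`-state ILFSC by at most `⌊n/ℓ⌋⁻¹ + f_s^k(ℓ)`. -/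
theorem blockEntropy_sub_compRatio_le {k : Type} [Fintype k] [DecidableEq k]
    (hk : 2 ≤ Fintype.card k) (C : FSC k) (hC : C.IL)
    (ℓ n : ℕ) (hℓ : 0 < ℓ) (hℓn : ℓ ≤ n) (u : List k) (hu : u.length = n) :
    (ent fun x : Fin ℓ → k => blockFreqL ℓ (u.take (n / ℓ * ℓ)) (List.ofFn x)) /
        (ℓ * Real.logb 2 (Fintype.card k)) -
      compRatio (Fintype.card k) C u ≤
    ((n / ℓ : ℕ) : ℝ)⁻¹ + fsk C.states (Fintype.card k) ℓ := by
  set m := n / ℓ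
  set freq : (Fin ℓ → k) → ℝ := fun x ↦ blockFreqL ℓ (u.take (m * ℓ)) (List.ofFn x)
  have hm : 0 < m := Nat.div_pos hℓn hℓ
  have hv : (u.take (m * ℓ)).length = m * ℓ := by simp [hu, m, Nat.div_mul_le_self]
  have hfreq0 (x : Fin ℓ → k) : 0 ≤ freq x := blockFreqL_nonneg _ _ _
  have hfreq1 : ∑ x, freq x = 1 := by
    simpa [hm.ne'] using sum_blockFreqL_mul hℓ hv fun _ ↦ 1
  have hcode : ∑ x, freq x * C.Lreach (List.ofFn x) ≤ (C.output u).length / m := by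
    simp only [freq]
    rw [sum_blockFreqL_mul hℓ hv fun w ↦ (C.Lreach w : ℝ)]
    gcongr
    exact_mod_cast (C.sum_Lreach_alignedBlock_le ℓ m ⟨[], rfl⟩ _).trans
      (C.length_outFrom_le_of_prefix _ (List.take_prefix _ u))
  have hent := (hC.ent_le_sum_mul_Lreach_add hfreq0 hfreq1).trans (add_le_add_left hcode _)
  have hent_max : ent freq ≤ ℓ * Real.logb 2 (Fintype.card k) := by
    simpa [Fintype.card_fun, Real.logb_pow] using ent_le_logb_card hfreq0 hfreq1
  rw [compRatio, hu]
  exact div_sub_div_le_inv_add_div (by positivity)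
    (Real.logb_pos one_lt_two (by exact_mod_cast hk)) (by positivity)
    (by exact_mod_cast Nat.div_mul_le_self n ℓ) (by exact_mod_cast (Nat.lt_div_mul_add hℓ).le)
    (by positivity) (fsk_nonneg C.states_pos _ _) hent hent_max
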